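/- arXiv:1705.02537 — 3 statements merged into one kernel-verified Lean document; each statement's English description precedes it below -/
import Mathlib

section
/- Let p ≥ 1 and let G be the complete bipartite graph K_{p,p}. Then for every vertex x of G, the minimum number of cliques of G needed to partition the closed neighborhood N[x] is exactly p. Consequently the minimum over all vertices x of β(N[x]) (denoted β̃(K_{p,p})) equals p, so the largest reduced neighborhood clique cover number of K_{p,p} at depth 0 is at least p. -/
/-- `S` can be partitioned into at most `n` cliques of `H`. -/
def CliqueCoverOn {V : Type*} (H : SimpleGraph V) (S : Set V) (n : ℕ) : Prop :=
  ∃ f : V → Fin n, ∀ v ∈ S, ∀ w ∈ S, f v = f w → v = w ∨ H.Adj v w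

/-- In `K_{p,p}` (with `p ≥ 1`), for every vertex `x` the minimum number of cliques needed
to partition the closed neighborhood `N[x]` is exactly `p`; consequently the minimum over
all vertices (`β̃(K_{p,p})`) is exactly `p`, so the largest reduced neighborhood clique
cover number of `K_{p,p}` at depth 0 is at least `p`. -/
theorem betaTilde_completeBipartite (p : ℕ) (hp : 1 ≤ p) :
    (∀ x : Fin p ⊕ Fin p,
      IsLeast {n : ℕ | CliqueCoverOn (completeBipartiteGraph (Fin p) (Fin p))
        (insert x ((completeBipartiteGraph (Fin p) (Fin p)).neighborSet x)) n} p) ∧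
    IsLeast {n : ℕ | ∃ x : Fin p ⊕ Fin p,
      CliqueCoverOn (completeBipartiteGraph (Fin p) (Fin p))
        (insert x ((completeBipartiteGraph (Fin p) (Fin p)).neighborSet x)) n} p := by
  have key : ∀ x : Fin p ⊕ Fin p,
      IsLeast {n : ℕ | CliqueCoverOn (completeBipartiteGraph (Fin p) (Fin p))
        (insert x ((completeBipartiteGraph (Fin p) (Fin p)).neighborSet x)) n} p := by
    intro x
    constructor
    · -- membership: the clique cover with p cliques
      refine ⟨fun v => Sum.elim id id v, ?_⟩
      rintro v hv w hw hfw
      rcases v with b | b <;> rcases w with c | c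
      · left; simp at hfw; rw [hfw]
      · right; simp
      · right; simp
      · left; simp at hfw; rw [hfw]
    · -- lower bound
      intro n hn
      obtain ⟨f, hf⟩ := hn
      rcases x with a | a
      · have hinj : Function.Injective (fun b : Fin p => f (Sum.inr b)) := by
          intro b b' h
          have hb : (Sum.inr b : Fin p ⊕ Fin p) ∈ insert (Sum.inl a)
              ((completeBipartiteGraph (Fin p) (Fin p)).neighborSet (Sum.inl a)) :=
            Set.mem_insert_of_mem _ (by simp [SimpleGraph.neighborSet])
          have hb' : (Sum.inr b' : Fin p ⊕ Fin p) ∈ insert (Sum.inl a)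
              ((completeBipartiteGraph (Fin p) (Fin p)).neighborSet (Sum.inl a)) :=
            Set.mem_insert_of_mem _ (by simp [SimpleGraph.neighborSet])
          rcases hf _ hb _ hb' h with h1 | h1
          · exact Sum.inr.inj h1
          · simp at h1
        simpa using Fintype.card_le_of_injective _ hinj
      · have hinj : Function.Injective (fun b : Fin p => f (Sum.inl b)) := by
          intro b b' h
          have hb : (Sum.inl b : Fin p ⊕ Fin p) ∈ insert (Sum.inr a)
              ((completeBipartiteGraph (Fin p) (Fin p)).neighborSet (Sum.inr a)) :=
            Set.mem_insert_of_mem _ (by simp [SimpleGraph.neighborSet])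
          have hb' : (Sum.inl b' : Fin p ⊕ Fin p) ∈ insert (Sum.inr a)
              ((completeBipartiteGraph (Fin p) (Fin p)).neighborSet (Sum.inr a)) :=
            Set.mem_insert_of_mem _ (by simp [SimpleGraph.neighborSet])
          rcases hf _ hb _ hb' h with h1 | h1
          · exact Sum.inl.inj h1
          · simp at h1
        simpa using Fintype.card_le_of_injective _ hinj
  refine ⟨key, ⟨⟨Sum.inl ⟨0, hp⟩, (key _).1⟩, ?_⟩⟩
  rintro n ⟨x, hx⟩
  exact (key x).2 hx
end

section
/- Let H be a finite simple graph whose vertex set is partitioned into cliques C_1, C_2, ..., C_k (an ordered clique partition) such that every edge ab of H with a ∈ C_i and b ∈ C_j satisfies |i − j| ≤ b, where b ≥ 0 is a fixed bound. If C_1 is nonempty, then there exists a vertex x ∈ C_1 such that the closed neighborhood N[x] can be partitioned into at most b + 1 cliques of H. In particular β̃(H) ≤ CCW(H) + 1 for every finite graph H. -/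
/-- `g` is an ordered clique partition of `H`: the parts (fibers of `g`, ordered by their
index) are cliques of `H`. -/
def IsOrderedCliquePartition {V : Type*} (H : SimpleGraph V) (g : V → ℕ) : Prop :=
  ∀ v w, g v = g w → v = w ∨ H.Adj v w

/-- The clique cover width of `H`: the least `b` such that some ordered clique partition of
`H` has all edge widths at most `b`. -/
noncomputable def CCW {V : Type*} (H : SimpleGraph V) : ℕ :=
  sInf {b : ℕ | ∃ g : V → ℕ, IsOrderedCliquePartition H g ∧
    ∀ v w, H.Adj v w → Nat.dist (g v) (g w) ≤ b}

lemma dist_sub_sub {a c m : ℕ} (ha : m ≤ a) (hc : m ≤ c) :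
    Nat.dist (a - m) (c - m) = Nat.dist a c := by
  have h1 : Nat.dist (a - m) (c - m) = (a - m) - (c - m) + ((c - m) - (a - m)) := rfl
  have h2 : Nat.dist a c = a - c + (c - a) := rfl
  omega

lemma aux_ccw {V : Type*} (H : SimpleGraph V) (b : ℕ) (g : V → ℕ)
    (hg : IsOrderedCliquePartition H g)
    (hw : ∀ v w, H.Adj v w → Nat.dist (g v) (g w) ≤ b)
    (x : V) (hx : g x = 0) :
    CliqueCoverOn H (insert x (H.neighborSet x)) (b + 1) := by
  refine ⟨fun v => ⟨min (g v) b, by omega⟩, ?_⟩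
  have hbd : ∀ v ∈ (insert x (H.neighborSet x) : Set V), g v ≤ b := by
    intro v hv
    rcases hv with rfl | hv
    · omega
    · have := hw x v hv
      unfold Nat.dist at this; omega
  intro v hv w hw2 hf
  have h1 := hbd v hv
  have h2 := hbd w hw2
  have : min (g v) b = min (g w) b := congrArg Fin.val hf
  exact hg v w (by omega)

/-- If `H` has an ordered clique partition whose edge widths are all at most `b` and whose
first part `C_1` (index `0`) is nonempty, then some vertex `x ∈ C_1` has its closed
neighborhood partitioned into at most `b + 1` cliques of `H`.  In particular, every
nonempty finite graph `H'` satisfies `β̃(H') ≤ CCW(H') + 1`. -/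
theorem betaTilde_le_ccw_succ {V : Type*} [Fintype V] (H : SimpleGraph V) (b : ℕ)
    (g : V → ℕ) (hg : IsOrderedCliquePartition H g)
    (hw : ∀ v w, H.Adj v w → Nat.dist (g v) (g w) ≤ b)
    (h0 : ∃ x, g x = 0) :
    (∃ x, g x = 0 ∧ CliqueCoverOn H (insert x (H.neighborSet x)) (b + 1)) ∧
    (∀ (W : Type) [Fintype W] (H' : SimpleGraph W), Nonempty W →
      ∃ x : W, CliqueCoverOn H' (insert x (H'.neighborSet x)) (CCW H' + 1)) := by
  refine ⟨?_, ?_⟩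
  · obtain ⟨x, hx⟩ := h0
    exact ⟨x, hx, aux_ccw H b g hg hw x hx⟩
  · intro W _ H' hW
    obtain ⟨x0⟩ := hW
    -- the defining set of CCW H' is nonempty
    have hne : {b : ℕ | ∃ g : W → ℕ, IsOrderedCliquePartition H' g ∧
        ∀ v w, H'.Adj v w → Nat.dist (g v) (g w) ≤ b}.Nonempty := by
      refine ⟨Fintype.card W, fun v => (Fintype.equivFin W v : ℕ), ?_, ?_⟩
      · intro v w h
        left
        have := Fin.val_injective h
        exact (Fintype.equivFin W).injective this
      · intro v w _
        have h1 : (Fintype.equivFin W v : ℕ) < Fintype.card W := (Fintype.equivFin W v).2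
        have h2 : (Fintype.equivFin W w : ℕ) < Fintype.card W := (Fintype.equivFin W w).2
        simp only [Nat.dist]; omega
    obtain ⟨g', hg', hw'⟩ := Nat.sInf_mem hne
    have : Nonempty W := ⟨x0⟩
    -- shift so that the minimum value is 0
    set m := (Finset.univ.image g').min' (by simp) with hm
    have hmin : ∀ v, m ≤ g' v := fun v =>
      Finset.min'_le _ _ (Finset.mem_image_of_mem g' (Finset.mem_univ v))
    obtain ⟨x, _, hx⟩ := Finset.mem_image.mp ((Finset.univ.image g').min'_mem (by simp))
    refine ⟨x, aux_ccw H' (CCW H') (fun v => g' v - m) ?_ ?_ x (Nat.sub_eq_zero_of_le (le_of_eq (hx.trans hm.symm)))⟩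
    · intro v w h
      simp only at h
      have hv := hmin v; have hw2 := hmin w
      exact hg' v w (by omega)
    · intro v w hadj
      show Nat.dist (g' v - m) (g' w - m) ≤ CCW H'
      rw [dist_sub_sub (hmin v) (hmin w)]
      exact hw' v w hadj
end

section
/- Let H be a finite simple graph with an ordered clique partition C_1, ..., C_k with C_1 nonempty, and for each vertex a ∈ C_1 let W(a) denote the maximum width of an edge incident to a (or 0 if a has no incident edge). Let a* ∈ C_1 attain the minimum of W(a) over a ∈ C_1. Then the closed neighborhood N[a*] can be partitioned into at most W(a*) + 1 cliques of H. -/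
/-- The maximum width `W(a)` of an edge incident to `a` (and `0` if `a` has no incident
edge), with respect to the ordered clique partition `g`. -/
def maxIncidentWidth {V : Type*} [Fintype V] [DecidableEq V] (H : SimpleGraph V)
    [DecidableRel H.Adj] (g : V → ℕ) (a : V) : ℕ :=
  (H.neighborFinset a).sup (fun c => Nat.dist (g a) (g c))

/-- Given an ordered clique partition of `H` whose first part `C_1` (index `0`) is
nonempty, if `a* ∈ C_1` minimizes `W(a)` over `a ∈ C_1`, then the closed neighborhood of
`a*` can be partitioned into at most `W(a*) + 1` cliques of `H`. -/
theorem cliqueCover_of_min_width_vertex {V : Type*} [Fintype V] [DecidableEq V]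
    (H : SimpleGraph V) [DecidableRel H.Adj] (g : V → ℕ)
    (hg : IsOrderedCliquePartition H g) (a : V) (ha : g a = 0)
    (hmin : ∀ b : V, g b = 0 → maxIncidentWidth H g a ≤ maxIncidentWidth H g b) :
    CliqueCoverOn H (insert a (H.neighborSet a)) (maxIncidentWidth H g a + 1) := by
  set W := maxIncidentWidth H g a with hW
  have key : ∀ v ∈ insert a (H.neighborSet a), g v ≤ W := by
    intro v hv
    rcases hv with rfl | hv
    · simp [ha]
    · have : Nat.dist (g a) (g v) ≤ W := by
        rw [hW, maxIncidentWidth]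
        exact Finset.le_sup (f := fun c => Nat.dist (g a) (g c))
          ((SimpleGraph.mem_neighborFinset H a v).2 hv)
      simpa [ha, Nat.dist] using this
  refine ⟨fun v => ⟨min (g v) W, by omega⟩, ?_⟩
  intro v hv w hw hvw
  apply hg
  have h1 := key v hv
  have h2 := key w hw
  have : min (g v) W = min (g w) W := by simpa using congrArg Fin.val hvw
  omega
end
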